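/- Under conditions (1)–(4), the map F(x) = x(p(x)) = (b2 - T0 - γ·x^4)/(a - b1) maps the interval [0,1] into itself. -/
import Mathlib

theorem stmt_4 (a b1 b2 T0 γ pmax : ℝ)
    (ha : 0 < a) (hb1 : 0 < b1) (hb2 : 0 < b2) (hT0 : 0 < T0) (hγ : 0 < γ)
    (hpmax : 1 < pmax)
    (h1 : b1 < a) (h2 : T0 + γ * 1 ^ 4 < b2)
    (h3 : a + pmax * (T0 + γ * 1 ^ 4) < b1 + pmax * b2)
    (h4 : a + (T0 + γ * 0 ^ 4) > b1 + b2) :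
    Set.MapsTo (fun x : ℝ => (b2 - T0 - γ * x ^ 4) / (a - b1))
      (Set.Icc (0 : ℝ) 1) (Set.Icc (0 : ℝ) 1) := by
  intro x hx
  obtain ⟨hx0, hx1⟩ := hx
  have hd : 0 < a - b1 := by linarith
  have hx4 : x ^ 4 ≤ 1 := pow_le_one₀ hx0 hx1
  have hx4' : 0 ≤ x ^ 4 := by positivity
  constructor
  · apply div_nonneg _ hd.le
    nlinarith
  · rw [div_le_one hd]
    nlinarith
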